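/- arXiv:2012.11499 — 3 statements merged into one kernel-verified Lean document; each statement's English description precedes it below -/
import Mathlib

section
/- Let γ ∈ (0,1) and G ⊆ G_γ, and let ψ be a tame strong solution of DHW_G. Then ‖ψ(z)‖_G = ‖ψ(0)‖_G for all z ∈ ℝ. -/
noncomputable section

open scoped RealInnerProductSpace BigOperators
open Real

/-- `ℝ^d` with the Euclidean structure. -/
abbrev V (d : ℕ) : Type := EuclideanSpace ℝ (Fin d)

/-- `Λ` is a full-rank lattice: the set of integer linear combinations of some
basis of `ℝ^d`. -/
def IsLattice {d : ℕ} (Λ : Set (V d)) : Prop :=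
  ∃ b : Module.Basis (Fin d) ℝ (V d),
    Λ = {x : V d | ∃ c : Fin d → ℤ, x = ∑ i, (c i : ℝ) • b i}

/-- The vector `ν = (0,…,0,1)`. -/
def nu (d : ℕ) (hd : 0 < d) : V d :=
  EuclideanSpace.single ⟨d - 1, Nat.sub_lt hd Nat.one_pos⟩ (1 : ℝ)

/-- `ρ_g = (k₀+g)·ν`. -/
def rho {d : ℕ} (k₀ ν g : V d) : ℝ := ⟪k₀ + g, ν⟫

/-- `σ_g = |k₀|² - |k₀+g|²`. -/
def sig {d : ℕ} (k₀ g : V d) : ℝ := ‖k₀‖ ^ 2 - ‖k₀ + g‖ ^ 2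

/-- `G_γ = {g ∈ Λ : ρ_g ≥ γ·ρ₀}`. -/
def Gset {d : ℕ} (Λ : Set (V d)) (k₀ ν : V d) (γ : ℝ) : Set (V d) :=
  {g ∈ Λ | γ * ⟪k₀, ν⟫ ≤ rho k₀ ν g}

/-- `G^M = {g ∈ Λ : |g| ≤ M}`. -/
def GMball {d : ℕ} (Λ : Set (V d)) (M : ℝ) : Set (V d) := {g ∈ Λ | ‖g‖ ≤ M}

/-- `𝔖_m(β) = Σ_{κ∈Λ} |κ|^m·exp(-β·|κ|)`. -/
def Sm {d : ℕ} (Λ : Set (V d)) (m : ℕ) (β : ℝ) : ℝ :=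
  ∑' κ : Λ, ‖(κ : V d)‖ ^ m * Real.exp (-β * ‖(κ : V d)‖)

/-- The norm `‖φ‖_G` of `ℋ(G)`. -/
def normOn {d : ℕ} (k₀ ν : V d) (G : Set (V d)) (φ : V d → ℂ) : ℝ :=
  Real.sqrt (∑' g : G, rho k₀ ν (g : V d) * ‖φ (g : V d)‖ ^ 2)

/-- The exponentially weighted norm `‖φ‖_α`. -/
def normA {d : ℕ} (k₀ ν : V d) (G : Set (V d)) (α : ℝ) (φ : V d → ℂ) : ℝ :=
  Real.sqrt (∑' g : G,
    Real.exp (2 * α * ‖(g : V d)‖) * rho k₀ ν (g : V d) * ‖φ (g : V d)‖ ^ 2)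

/-- `φ|_G` is a member of `ℋ(G)`, i.e. `‖φ‖_G² < ∞`. -/
def MemH {d : ℕ} (k₀ ν : V d) (G : Set (V d)) (φ : V d → ℂ) : Prop :=
  Summable fun g : G => rho k₀ ν (g : V d) * ‖φ (g : V d)‖ ^ 2

/-- The DHW equations on the beam set `G`:
`(ρ_g/π)·ψ_g′(z) = i(σ_g ψ_g(z) + Σ_{h∈G} U(g-h) ψ_h(z))` for `g ∈ G`,
including summability of the interaction sum. -/
def SatDHW {d : ℕ} (k₀ ν : V d) (U : V d → ℂ) (G : Set (V d)) (ψ : ℝ → V d → ℂ) : Prop :=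
  ∀ z : ℝ, ∀ g ∈ G,
    Summable (fun h : G => U (g - (h : V d)) * ψ z (h : V d)) ∧
    HasDerivAt (fun w => ψ w g)
      (((π / rho k₀ ν g : ℝ) : ℂ) * (Complex.I *
        (((sig k₀ g : ℝ) : ℂ) * ψ z g +
          ∑' h : G, U (g - (h : V d)) * ψ z (h : V d)))) z

/-- `z ↦ (w(g)·ψ_g(z))_{g∈G}` is a differentiable curve in `ℋ(G)`, encoded by
the weighted embedding `g ↦ w(g)·√ρ_g·ψ_g(z)` into `ℓ²(G)`. -/
def CurveDiff {d : ℕ} (k₀ ν : V d) (G : Set (V d)) (w : V d → ℝ) (ψ : ℝ → V d → ℂ) : Prop :=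
  ∃ A : ℝ → lp (fun _ : G => ℂ) 2, Differentiable ℝ A ∧
    ∀ (z : ℝ) (g : G),
      A z g = ((w (g : V d) * Real.sqrt (rho k₀ ν (g : V d)) : ℝ) : ℂ) * ψ z (g : V d)

/-- Tame strong solution of `DHW_G`. -/
def IsTameSol {d : ℕ} (k₀ ν : V d) (U : V d → ℂ) (G : Set (V d)) (ψ : ℝ → V d → ℂ) : Prop :=
  SatDHW k₀ ν U G ψ ∧ CurveDiff k₀ ν G (fun _ => 1) ψ ∧
  ∀ z : ℝ,
    Summable (fun g : G => |sig k₀ (g : V d)| * ‖ψ z (g : V d)‖ ^ 2) ∧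
    Summable (fun q : G × G =>
      ‖U ((q.1 : V d) - (q.2 : V d))‖ * ‖ψ z (q.2 : V d)‖ * ‖ψ z (q.1 : V d)‖)

/-- `α`-tame strong solution of `DHW_G`. -/
def IsAlphaTameSol {d : ℕ} (k₀ ν : V d) (U : V d → ℂ) (G : Set (V d)) (α : ℝ)
    (ψ : ℝ → V d → ℂ) : Prop :=
  SatDHW k₀ ν U G ψ ∧ CurveDiff k₀ ν G (fun _ => 1) ψ ∧
  CurveDiff k₀ ν G (fun g => Real.exp (α * ‖g‖)) ψ ∧
  ∀ z : ℝ,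
    Summable (fun g : G =>
      Real.exp (2 * α * ‖(g : V d)‖) * |sig k₀ (g : V d)| * ‖ψ z (g : V d)‖ ^ 2) ∧
    Summable (fun q : G × G =>
      Real.exp (α * ‖(q.1 : V d)‖ + α * ‖(q.2 : V d)‖) *
        ‖U ((q.1 : V d) - (q.2 : V d))‖ * ‖ψ z (q.2 : V d)‖ * ‖ψ z (q.1 : V d)‖)

open Classical in
/-- Initial condition `ψ(0) = δ` on `G`. -/
def InitDelta {d : ℕ} (G : Set (V d)) (ψ : ℝ → V d → ℂ) : Prop :=
  ∀ g ∈ G, ψ 0 g = if g = (0 : V d) then 1 else 0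

/-!
Put `A(z) := (√ρ_g · ψ_g(z))_{g ∈ G} ∈ ℓ²(G)`, so that `‖ψ(z)‖_G = ‖A(z)‖` and
`d/dz ‖A(z)‖² = 2 Re ⟪A(z), A'(z)⟫`. By the DHW equations the `g`-th term of `⟪A, A'⟫` is
`iπ (σ_g |ψ_g|² + conj ψ_g · Σ_h U(g-h) ψ_h)`. The `σ`-part sums to a real number, and so does the
interaction part: it is a Hermitian form, because `U(h-g) = conj U(g-h)` as `g - h` lies in the
lattice, and tameness makes the double sum absolutely convergent so that it may be rearranged.
Hence `Re ⟪A, A'⟫ = 0` and the norm is conserved.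
-/

open scoped ComplexConjugate

theorem IsLattice.sub_mem {d : ℕ} {Λ : Set (V d)} (hΛ : IsLattice Λ) {x y : V d}
    (hx : x ∈ Λ) (hy : y ∈ Λ) : x - y ∈ Λ := by
  obtain ⟨b, rfl⟩ := hΛ
  obtain ⟨c, rfl⟩ := hx
  obtain ⟨c', rfl⟩ := hy
  exact ⟨c - c', by simp [sub_smul, Finset.sum_sub_distrib]⟩

theorem exists_hasSum_ofReal_of_hermitian {ι : Type*} {K : ι → ι → ℂ}
    (hK : ∀ g h, K h g = conj (K g h)) {x : ι → ℂ}
    (hx : Summable fun q : ι × ι => ‖K q.1 q.2‖ * ‖x q.2‖ * ‖x q.1‖) :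
    ∃ r : ℝ, HasSum (fun g => conj (x g) * ∑' h, K g h * x h) r := by
  set F : ι × ι → ℂ := fun q => conj (x q.1) * (K q.1 q.2 * x q.2)
  have hF : Summable F := .of_norm <| hx.congr fun q => by simp [F, mul_comm, mul_left_comm]
  have hrows : HasSum (fun g => conj (x g) * ∑' h, K g h * x h) (∑' q, F q) :=
    hF.hasSum.prod_fiberwise fun g => by
      simpa only [F, tsum_mul_left] using (hF.prod_factor g).hasSum
  -- `F ∘ swap = conj ∘ F`, so the total sum is its own conjugate
  have hswap : HasSum F (conj (∑' q, F q)) := by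
    rw [← Complex.hasSum_conj, ← (Equiv.prodComm ι ι).hasSum_iff]
    convert hF.hasSum using 1
    ext ⟨g, h⟩
    simp only [F, Function.comp_apply, Equiv.prodComm_apply, Prod.swap_prod_mk, map_mul,
      Complex.conj_conj, ← hK h g]
    ring
  refine ⟨(∑' q, F q).re, ?_⟩
  rwa [Complex.conj_eq_iff_re.mp (hswap.unique hF.hasSum)]

theorem norm_eq_norm_zero_of_re_inner_deriv_eq_zero {E : Type*} [NormedAddCommGroup E]
    [InnerProductSpace ℂ E] [NormedSpace ℝ E] {A A' : ℝ → E}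
    (hA : ∀ z, HasDerivAt A (A' z) z) (h : ∀ z, (inner ℂ (A z) (A' z)).re = 0) (z : ℝ) :
    ‖A z‖ = ‖A 0‖ := by
  have hderiv : ∀ z, HasDerivAt (fun w => ‖A w‖ ^ 2) 0 z := fun z => by
    have h' : (inner ℂ (A' z) (A z)).re = 0 :=
      (inner_re_symm (𝕜 := ℂ) (A' z) (A z)).trans (h z)
    have := Complex.reCLM.hasFDerivAt.comp_hasDerivAt z ((hA z).inner ℂ (hA z))
    rw [Complex.reCLM_apply, Complex.add_re, h z, h', add_zero] at this
    have hfun : (fun w => ‖A w‖ ^ 2) = Complex.reCLM ∘ fun w => inner ℂ (A w) (A w) :=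
      funext fun w => (inner_self_eq_norm_sq (𝕜 := ℂ) (A w)).symm
    rwa [hfun]
  have hsq := is_const_of_deriv_eq_zero (fun z => (hderiv z).differentiableAt)
    (fun z => (hderiv z).deriv) z 0
  exact (pow_left_inj₀ (norm_nonneg _) (norm_nonneg _) two_ne_zero).mp hsq

theorem normOn_eq_norm {d : ℕ} {k₀ ν : V d} {G : Set (V d)} (hρ : ∀ g ∈ G, 0 ≤ rho k₀ ν g)
    {φ : V d → ℂ} {A : lp (fun _ : G => ℂ) 2}
    (hA : ∀ g : G, A g = (√(rho k₀ ν g) : ℂ) * φ g) : normOn k₀ ν G φ = ‖A‖ := by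
  have hsum : HasSum (fun g : G => rho k₀ ν g * ‖φ g‖ ^ 2) (‖A‖ ^ 2) := by
    have := Complex.hasSum_re (lp.hasSum_inner A A)
    convert this using 1
    · ext g
      rw [← RCLike.re_eq_complex_re, inner_self_eq_norm_sq, hA g, norm_mul, mul_pow,
        Complex.norm_real, Real.norm_eq_abs, sq_abs, Real.sq_sqrt (hρ g g.2)]
    · exact (inner_self_eq_norm_sq (𝕜 := ℂ) A).symm
  rw [normOn, hsum.tsum_eq, Real.sqrt_sq (norm_nonneg A)]

theorem conj_mul_dhw_eq {ρ σ : ℝ} (hρ : 0 < ρ) (ψ S : ℂ) :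
    conj ((√ρ : ℂ) * ψ) * ((√ρ : ℂ) * (((π / ρ : ℝ) : ℂ) * (Complex.I * (σ * ψ + S))))
      = Complex.I * π * ((σ * ‖ψ‖ ^ 2 : ℝ) + conj ψ * S) := by
  have hsq : (√ρ : ℂ) * √ρ * ((π / ρ : ℝ) : ℂ) = π := by
    rw [← Complex.ofReal_mul, Real.mul_self_sqrt hρ.le, ← Complex.ofReal_mul,
      mul_div_cancel₀ _ hρ.ne']
  have hnorm : ((‖ψ‖ ^ 2 : ℝ) : ℂ) = conj ψ * ψ := by
    rw [Complex.ofReal_pow, mul_comm, Complex.mul_conj']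
  simp only [map_mul, Complex.conj_ofReal, Complex.ofReal_mul, hnorm]
  linear_combination (Complex.I * (σ * (conj ψ * ψ) + conj ψ * S)) * hsq

theorem re_inner_deriv_eq_zero_of_satDHW {d : ℕ} {k₀ ν : V d} {U : V d → ℂ} {G : Set (V d)}
    {ψ : ℝ → V d → ℂ} (hρ : ∀ g ∈ G, 0 < rho k₀ ν g)
    (hU : ∀ g ∈ G, ∀ h ∈ G, U (h - g) = conj (U (g - h))) (hDHW : SatDHW k₀ ν U G ψ) {z : ℝ}
    (hσ : Summable fun g : G => |sig k₀ g| * ‖ψ z g‖ ^ 2)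
    (hUψ : Summable fun q : G × G => ‖U (q.1 - q.2)‖ * ‖ψ z q.2‖ * ‖ψ z q.1‖)
    {A : ℝ → lp (fun _ : G => ℂ) 2} (hA : ∀ w (g : G), A w g = (√(rho k₀ ν g) : ℂ) * ψ w g)
    {A' : lp (fun _ : G => ℂ) 2} (hA' : HasDerivAt A A' z) :
    (inner ℂ (A z) A').re = 0 := by
  have hcoord (g : G) : A' g = (√(rho k₀ ν g) : ℂ) * (((π / rho k₀ ν g : ℝ) : ℂ) *
      (Complex.I * (sig k₀ g * ψ z g + ∑' h : G, U (g - h) * ψ z h))) := by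
    have hcomp : HasDerivAt (fun w => A w g) (A' g) z :=
      (lp.evalCLM ℝ (fun _ : G => ℂ) 2 g).hasFDerivAt.comp_hasDerivAt z hA'
    refine hcomp.unique ?_
    simp only [hA]
    exact (hDHW z g g.2).2.const_mul _
  obtain ⟨r, hr⟩ := exists_hasSum_ofReal_of_hermitian (K := fun g h : G => U (g - h))
    (x := fun g : G => ψ z g) (fun g h => hU g g.2 h h.2) hUψ
  have hs : Summable fun g : G => sig k₀ g * ‖ψ z g‖ ^ 2 :=
    .of_abs <| hσ.congr fun g => by rw [abs_mul, abs_sq]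
  have hsum := ((Complex.hasSum_ofReal.mpr hs.hasSum).add hr).mul_left (Complex.I * π)
  rw [(lp.hasSum_inner (A z) A').unique (hsum.congr_fun ?_)]
  · simp
  · intro g
    rw [RCLike.inner_apply', hA z g, hcoord g, conj_mul_dhw_eq (hρ g g.2)]

theorem stmt1_general {d : ℕ} (hd : 0 < d) (Λ : Set (V d)) (hΛ : IsLattice Λ)
    (k₀ : V d) (hk : 0 < ⟪k₀, nu d hd⟫)
    (U : V d → ℂ) (hUsym : ∀ g ∈ Λ, U (-g) = starRingEnd ℂ (U g))
    (γ : ℝ) (hγ : γ ∈ Set.Ioo (0 : ℝ) 1)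
    (G : Set (V d)) (hG : G ⊆ Gset Λ k₀ (nu d hd) γ)
    (ψ : ℝ → V d → ℂ) (hψ : IsTameSol k₀ (nu d hd) U G ψ) :
    ∀ z : ℝ, normOn k₀ (nu d hd) G (ψ z) = normOn k₀ (nu d hd) G (ψ 0) := by
  obtain ⟨hDHW, ⟨A, hAdiff, hA⟩, htame⟩ := hψ
  have hρ : ∀ g ∈ G, 0 < rho k₀ (nu d hd) g := fun g hg =>
    (mul_pos hγ.1 hk).trans_le (hG hg).2
  have hU : ∀ g ∈ G, ∀ h ∈ G, U (h - g) = conj (U (g - h)) := fun g hg h hh => by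
    rw [← neg_sub]
    exact hUsym _ (hΛ.sub_mem (hG hg).1 (hG hh).1)
  have hA' : ∀ w (g : G), A w g = (√(rho k₀ (nu d hd) g) : ℂ) * ψ w g := fun w g => by
    simpa only [one_mul] using hA w g
  intro z
  rw [normOn_eq_norm (fun g hg => (hρ g hg).le) (hA' z),
    normOn_eq_norm (fun g hg => (hρ g hg).le) (hA' 0)]
  exact norm_eq_norm_zero_of_re_inner_deriv_eq_zero (fun w => (hAdiff w).hasDerivAt)
    (fun w => re_inner_deriv_eq_zero_of_satDHW hρ hU hDHW (htame w).1 (htame w).2 hA'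
      (hAdiff w).hasDerivAt) z

/-- norm conservation for tame strong solutions:
for `γ ∈ (0,1)`, `G ⊆ G_γ` and a tame strong solution `ψ` of `DHW_G`,
`‖ψ(z)‖_G = ‖ψ(0)‖_G` for all `z ∈ ℝ`. -/
theorem stmt1 {d : ℕ} (hd : 0 < d) (Λ : Set (V d)) (hΛ : IsLattice Λ)
    (k₀ : V d) (hk : 0 < ⟪k₀, nu d hd⟫)
    (U : V d → ℂ) (hUsym : ∀ g ∈ Λ, U (-g) = starRingEnd ℂ (U g))
    (CU αU : ℝ) (hCU : 0 < CU) (hαU : 0 < αU)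
    (hUbd : ∀ g ∈ Λ, ‖U g‖ ≤ CU * Real.exp (-αU * ‖g‖))
    (γ : ℝ) (hγ : γ ∈ Set.Ioo (0 : ℝ) 1)
    (G : Set (V d)) (hG : G ⊆ Gset Λ k₀ (nu d hd) γ)
    (ψ : ℝ → V d → ℂ) (hψ : IsTameSol k₀ (nu d hd) U G ψ) :
    ∀ z : ℝ, normOn k₀ (nu d hd) G (ψ z) = normOn k₀ (nu d hd) G (ψ 0) :=
  stmt1_general hd Λ hΛ k₀ hk U hUsym γ hγ G hG ψ hψ
end
end

section
/- Let γ ∈ (0,1) and M > 0 be such that G^M ⊆ G_γ (so 0 ∈ G^M), let s̃_* > 0, and set G^M_Ew := {g ∈ G^M : |σ_g|/(2ρ_g) < s̃_*} (which contains 0 since σ_0 = 0). Let ψ^M : ℝ → ℂ^{G^M} and ψ^M_Ew : ℝ → ℂ^{G^M_Ew} be the unique solutions of the finite systems DHW_{G^M} and DHW_{G^M_Ew}, respectively, with initial datum δ. Then for all z ∈ ℝ: ‖ψ^M_Ew(z) − ψ^M(z)|_{G^M_Ew}‖_{G^M_Ew} ≤ |z|·(π/s̃_*)·(C_U²·(𝔖₀(α_U)−1)·𝔖₀(α_U)/(γ²·ρ₀²))·√ρ₀.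 -/
noncomputable section

open scoped RealInnerProductSpace BigOperators
open Real

/-!
The difference `u = ψ^M_Ew - ψ^M|_{G^M_Ew}` solves the Ewald system forced by the coupling
`f_g = -∑_{h ∈ G^M \ G^M_Ew} U(g-h) ψ^M_h`. Both systems have the Hermitian matrix
`diag σ + (U(g-h))`, so the weighted norm `∑ ρ_g |·|²` of a free solution is conserved, and for
`u` (with `u(0) = 0`) its square root grows at most like `π |z| sup_z ‖f(z)‖_{ρ⁻¹}`.

To bound the forcing one needs `ψ^M` to be small off the Ewald set, where `|σ_h| ≥ 2 s̃ ρ_h`.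
This comes from a second conserved quantity: `χ = ρ⁻¹ H ψ^M` solves the same free system, and
`χ(0) = ρ⁻¹ U` because `σ₀ = 0`. Writing `σ ψ = ρ χ - U * ψ` bounds `∑ σ²/ρ |ψ^M|²` by the
conserved norms of `χ` and `ψ^M`. The exponential decay of `U` enters only through the Schur
test: the rows and columns of `(|U(g-h)|)` sum to at most `C_U 𝔖₀(α_U)`, and to at most
`C_U (𝔖₀(α_U) - 1)` between disjoint sets of lattice points, since then `g - h ≠ 0`.
-/

lemma sqrt_le_sqrt_add_mul_abs {E E' : ℝ → ℝ} {C : ℝ} (hC : 0 ≤ C) (hE0 : ∀ z, 0 ≤ E z)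
    (hE : ∀ z, HasDerivAt E (E' z) z) (hE' : ∀ z, |E' z| ≤ 2 * C * √(E z)) (z : ℝ) :
    √(E z) ≤ √(E 0) + C * |z| := by
  refine le_of_forall_pos_le_add fun ε hε => ?_
  -- `√(E + ε²)` is differentiable even where `E` vanishes, with derivative at most `C`.
  have hpos : ∀ w, 0 < E w + ε ^ 2 := fun w => add_pos_of_nonneg_of_pos (hE0 w) (by positivity)
  have hy : ∀ w, HasDerivAt (fun w => √(E w + ε ^ 2)) (E' w / (2 * √(E w + ε ^ 2))) w :=
    fun w => ((hE w).add_const _).sqrt (hpos w).ne'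
  have hy' : ∀ w, ‖E' w / (2 * √(E w + ε ^ 2))‖ ≤ C := fun w => by
    have hs : 0 < √(E w + ε ^ 2) := Real.sqrt_pos.mpr (hpos w)
    rw [Real.norm_eq_abs, abs_div, abs_of_pos (by positivity : (0 : ℝ) < 2 * √(E w + ε ^ 2)),
      div_le_iff₀ (by positivity)]
    calc |E' w| ≤ 2 * C * √(E w) := hE' w
      _ ≤ C * (2 * √(E w + ε ^ 2)) := by
          nlinarith [Real.sqrt_le_sqrt (by nlinarith : E w ≤ E w + ε ^ 2)]
  have hmvt := Convex.norm_image_sub_le_of_norm_hasDerivWithin_le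
    (fun w _ => (hy w).hasDerivWithinAt) (fun w _ => hy' w) convex_univ
    (Set.mem_univ 0) (Set.mem_univ z)
  rw [Real.norm_eq_abs, Real.norm_eq_abs, sub_zero] at hmvt
  have h1 : √(E z) ≤ √(E z + ε ^ 2) := Real.sqrt_le_sqrt (by nlinarith)
  have h2 : √(E 0 + ε ^ 2) ≤ √(E 0) + ε := by
    rw [Real.sqrt_le_left (by positivity)]
    nlinarith [Real.sq_sqrt (hE0 0), Real.sqrt_nonneg (E 0)]
  linarith [le_abs_self (√(E z + ε ^ 2) - √(E 0 + ε ^ 2))]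

lemma sum_sq_sum_mul_le {S T : Type*} [Fintype S] [Fintype T] {a : S → T → ℝ}
    (ha : ∀ s t, 0 ≤ a s t) {C C' : ℝ} (hC : 0 ≤ C) (hrow : ∀ s, ∑ t, a s t ≤ C)
    (hcol : ∀ t, ∑ s, a s t ≤ C') (x : T → ℝ) :
    ∑ s, (∑ t, a s t * x t) ^ 2 ≤ C * C' * ∑ t, x t ^ 2 := by
  have hCS : ∀ s, (∑ t, a s t * x t) ^ 2 ≤ C * ∑ t, a s t * x t ^ 2 := fun s =>
    (Finset.sum_sq_le_sum_mul_sum_of_sq_le_mul _ (fun t _ => ha s t)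
      (fun t _ => mul_nonneg (ha s t) (sq_nonneg _)) (fun t _ => by nlinarith [ha s t])).trans
      (mul_le_mul_of_nonneg_right (hrow s)
        (Finset.sum_nonneg fun t _ => mul_nonneg (ha s t) (sq_nonneg _)))
  calc ∑ s, (∑ t, a s t * x t) ^ 2 ≤ ∑ s, C * ∑ t, a s t * x t ^ 2 :=
        Finset.sum_le_sum fun s _ => hCS s
    _ = C * ∑ t, (∑ s, a s t) * x t ^ 2 := by
        rw [← Finset.mul_sum, Finset.sum_comm]
        simp only [Finset.sum_mul]
    _ ≤ C * ∑ t, C' * x t ^ 2 :=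
        mul_le_mul_of_nonneg_left
          (Finset.sum_le_sum fun t _ => mul_le_mul_of_nonneg_right (hcol t) (sq_nonneg _)) hC
    _ = C * C' * ∑ t, x t ^ 2 := by rw [← Finset.mul_sum, mul_assoc]

lemma sq_div_mul_sq_le {s n p x w c : ℝ} (hc : 0 < c) (hcp : c ≤ p)
    (h : |s| * n ≤ p * x + w) (hn : 0 ≤ n) :
    s ^ 2 / p * n ^ 2 ≤ 2 * (p * x ^ 2) + 2 * w ^ 2 / c := by
  have hp : 0 < p := hc.trans_le hcp
  have h1 : (s * n) ^ 2 ≤ 2 * (p * x) ^ 2 + 2 * w ^ 2 := by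
    have := pow_le_pow_left₀ (by positivity) h 2
    rw [mul_pow, ← sq_abs s, ← mul_pow]
    nlinarith [sq_nonneg (p * x - w)]
  have h2 : w ^ 2 / p ≤ w ^ 2 / c := div_le_div_of_nonneg_left (sq_nonneg w) hc hcp
  calc s ^ 2 / p * n ^ 2 = (s * n) ^ 2 / p := by ring
    _ ≤ (2 * (p * x) ^ 2 + 2 * w ^ 2) / p := div_le_div_of_nonneg_right h1 hp.le
    _ = 2 * (p * x ^ 2) + 2 * (w ^ 2 / p) := by field_simp
    _ ≤ _ := by rw [mul_div_assoc]; linarith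

lemma sum_subtype_le_of_subset {α : Type*} {s t : Set α} [Fintype s] [Fintype t] (hst : s ⊆ t)
    {F : α → ℝ} (hF : ∀ x ∈ t, 0 ≤ F x) : ∑ x : s, F x ≤ ∑ x : t, F x := by
  simpa only [tsum_fintype, Function.comp_def, Set.coe_inclusion] using
    tsum_comp_le_tsum_of_inj (f := fun x : t => F x) .of_finite (fun x => hF x x.2)
      (Set.inclusion_injective hst)

lemma ZLattice.summable_exp_neg_mul_norm {E : Type*} [NormedAddCommGroup E] [NormedSpace ℝ E]
    [FiniteDimensional ℝ E] (L : Submodule ℤ E) [DiscreteTopology L] {β : ℝ} (hβ : 0 < β) :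
    Summable fun z : L => Real.exp (-β * ‖z‖) := by
  -- Compare with `∑ ‖z‖⁻ⁿ`, `n > rank L`, using `exp (β t) ≥ (β t)ⁿ / n!`.
  set n := Module.finrank ℤ L + 1
  refine Summable.of_norm_bounded_eventually
    ((ZLattice.summable_norm_pow_inv L n (Nat.lt_succ_self _)).mul_left (n.factorial / β ^ n)) ?_
  filter_upwards [(Set.finite_singleton (0 : L)).compl_mem_cofinite] with z hz
  have hz : 0 < ‖z‖ := norm_pos_iff.mpr hz
  have h := Real.pow_div_factorial_le_exp (β * ‖z‖) (by positivity) n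
  rw [Real.norm_eq_abs, abs_of_pos (Real.exp_pos _), neg_mul, Real.exp_neg, inv_pow,
    ← div_eq_mul_inv, inv_le_comm₀ (Real.exp_pos _) (by positivity)]
  refine Eq.trans_le ?_ h
  rw [mul_pow]
  field_simp

section ExpKernel

variable {E : Type*} [SeminormedAddCommGroup E] {L : AddSubgroup E} {β : ℝ}
  {T : Type*} [Fintype T] {j : T → E} {g : E}

lemma sum_exp_neg_norm_sub_le (hsum : Summable fun κ : L => Real.exp (-β * ‖(κ : E)‖))
    (hj : Function.Injective j) (hjL : ∀ t, j t ∈ L) (hg : g ∈ L) :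
    ∑ t, Real.exp (-β * ‖g - j t‖) ≤ ∑' κ : L, Real.exp (-β * ‖(κ : E)‖) := by
  have hi : Function.Injective fun t => (⟨g - j t, L.sub_mem hg (hjL t)⟩ : L) :=
    fun s t hst => hj (sub_right_injective (congrArg Subtype.val hst))
  rw [← tsum_fintype (L := .unconditional T)]
  exact tsum_comp_le_tsum_of_inj hsum (fun _ => (Real.exp_pos _).le) hi

lemma sum_exp_neg_norm_sub_add_one_le (hsum : Summable fun κ : L => Real.exp (-β * ‖(κ : E)‖))
    (hj : Function.Injective j) (hjL : ∀ t, j t ∈ L) (hg : g ∈ L) (hgj : ∀ t, j t ≠ g) :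
    ∑ t, Real.exp (-β * ‖g - j t‖) + 1 ≤ ∑' κ : L, Real.exp (-β * ‖(κ : E)‖) := by
  -- The extra point `none ↦ g` contributes the term `exp 0 = 1`.
  have hj' : Function.Injective fun o : Option T => o.elim g j := by
    rintro (_ | s) (_ | t) hst
    exacts [rfl, absurd hst.symm (hgj t), absurd hst (hgj s), congrArg some (hj hst)]
  have h := sum_exp_neg_norm_sub_le hsum hj' (fun o => o.rec hg hjL) hg
  simpa [Fintype.sum_option, add_comm] using h

end ExpKernel

lemma IsLattice.exists_eq_span {d : ℕ} {Λ : Set (V d)} (hΛ : IsLattice Λ) :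
    ∃ b : Module.Basis (Fin d) ℝ (V d), Λ = (Submodule.span ℤ (Set.range b)).toAddSubgroup := by
  obtain ⟨b, rfl⟩ := hΛ
  refine ⟨b, Set.ext fun x => ?_⟩
  simp [Submodule.mem_span_range_iff_exists_fun, eq_comm, Int.cast_smul_eq_zsmul]

lemma finite_GMball_span {d : ℕ} (b : Module.Basis (Fin d) ℝ (V d)) (M : ℝ) :
    (GMball ((Submodule.span ℤ (Set.range b)).toAddSubgroup : Set (V d)) M).Finite :=
  (ZSpan.setFinite_inter b (Metric.isBounded_closedBall (x := 0) (r := M))).subset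
    fun _ hg => ⟨mem_closedBall_zero_iff.2 hg.2, hg.1⟩

section DHWFlow

open Matrix

variable {ι : Type*} [Fintype ι]

def weightedNormSq (ρ : ι → ℝ) (v : ι → ℂ) : ℝ := ∑ i, ρ i * ‖v i‖ ^ 2

/-- `(ρ_i / π) u_i' = i ((H u)_i + f_i)`: the DHW equations with matrix `H` and a source `f`. -/
def IsDHWFlow (ρ : ι → ℝ) (H : Matrix ι ι ℂ) (f u : ℝ → ι → ℂ) : Prop :=
  ∀ z i, HasDerivAt (fun w => u w i)
    (((π / ρ i : ℝ) : ℂ) * (Complex.I * ((H *ᵥ u z) i + f z i))) z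

variable {ρ : ι → ℝ} {H : Matrix ι ι ℂ} {f u : ℝ → ι → ℂ}

lemma weightedNormSq_nonneg (hρ : ∀ i, 0 < ρ i) (v : ι → ℂ) : 0 ≤ weightedNormSq ρ v :=
  Finset.sum_nonneg fun i _ => mul_nonneg (hρ i).le (sq_nonneg _)

lemma sum_norm_sq_le_weightedNormSq_div {c : ℝ} (hc : 0 < c) (hρ : ∀ i, c ≤ ρ i) (v : ι → ℂ) :
    ∑ i, ‖v i‖ ^ 2 ≤ weightedNormSq ρ v / c := by
  rw [le_div_iff₀ hc, Finset.sum_mul]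
  exact Finset.sum_le_sum fun i _ => by nlinarith [hρ i, sq_nonneg ‖v i‖]

lemma abs_im_star_dotProduct_le (hρ : ∀ i, 0 < ρ i) (v w : ι → ℂ) :
    |(star v ⬝ᵥ w).im| ≤ √(weightedNormSq ρ v) * √(∑ i, ‖w i‖ ^ 2 / ρ i) := by
  have hsqrt : ∀ i, √(ρ i) ≠ 0 := fun i => (Real.sqrt_pos.mpr (hρ i)).ne'
  calc |(star v ⬝ᵥ w).im| ≤ ‖star v ⬝ᵥ w‖ := Complex.abs_im_le_norm _
    _ ≤ ∑ i, ‖v i‖ * ‖w i‖ := by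
        refine (norm_sum_le _ _).trans_eq (Finset.sum_congr rfl fun i _ => ?_)
        simp [Pi.star_apply]
    _ = ∑ i, (√(ρ i) * ‖v i‖) * (‖w i‖ / √(ρ i)) :=
        Finset.sum_congr rfl fun i _ => by field_simp [hsqrt i]
    _ ≤ √(∑ i, (√(ρ i) * ‖v i‖) ^ 2) * √(∑ i, (‖w i‖ / √(ρ i)) ^ 2) :=
        Real.sum_mul_le_sqrt_mul_sqrt _ _ _
    _ = √(weightedNormSq ρ v) * √(∑ i, ‖w i‖ ^ 2 / ρ i) := by
        simp only [weightedNormSq, mul_pow, div_pow, Real.sq_sqrt (hρ _).le]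

lemma IsDHWFlow.hasDerivAt_weightedNormSq (hu : IsDHWFlow ρ H f u) (hρ : ∀ i, ρ i ≠ 0)
    (hH : H.IsHermitian) (z : ℝ) :
    HasDerivAt (fun w => weightedNormSq ρ (u w)) (-(2 * π * (star (u z) ⬝ᵥ f z).im)) z := by
  have hterm : ∀ i, ρ i * (2 * ⟪u z i,
      ((π / ρ i : ℝ) : ℂ) * (Complex.I * ((H *ᵥ u z) i + f z i))⟫)
      = -(2 * π * (star (u z i) * ((H *ᵥ u z) i + f z i)).im) := by
    intro i
    rw [Complex.inner]
    simp only [Complex.mul_re, Complex.mul_im, Complex.ofReal_re, Complex.ofReal_im,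
      Complex.I_re, Complex.I_im, Complex.conj_re, Complex.conj_im, Complex.star_def]
    field_simp [hρ i]
    ring
  refine (HasDerivAt.fun_sum fun i _ => ((hu z i).norm_sq).const_mul (ρ i)).congr_deriv ?_
  have hreal : (star (u z) ⬝ᵥ H *ᵥ u z).im = 0 := hH.im_star_dotProduct_mulVec_self (u z)
  simp only [hterm, Finset.sum_neg_distrib, ← Finset.mul_sum, ← Complex.im_sum]
  change -(2 * π * (star (u z) ⬝ᵥ (H *ᵥ u z + f z)).im) = _
  rw [dotProduct_add, Complex.add_im, hreal, zero_add]

lemma IsDHWFlow.weightedNormSq_eq (hu : IsDHWFlow ρ H 0 u) (hρ : ∀ i, ρ i ≠ 0)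
    (hH : H.IsHermitian) (z : ℝ) : weightedNormSq ρ (u z) = weightedNormSq ρ (u 0) := by
  have hE : ∀ w, HasDerivAt (fun w => weightedNormSq ρ (u w)) 0 w := fun w => by
    simpa using hu.hasDerivAt_weightedNormSq hρ hH w
  exact is_const_of_deriv_eq_zero (fun w => (hE w).differentiableAt) (fun w => (hE w).deriv) z 0

lemma IsDHWFlow.inv_mul_mulVec (hu : IsDHWFlow ρ H 0 u) :
    IsDHWFlow ρ H 0 (fun z i => ((ρ i : ℂ))⁻¹ * (H *ᵥ u z) i) := by
  intro z i
  have h := (HasDerivAt.fun_sum (u := Finset.univ) fun j _ => (hu z j).const_mul (H i j)).const_mul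
    ((ρ i : ℂ))⁻¹
  refine h.congr_deriv ?_
  simp only [Pi.zero_apply, add_zero]
  change _ = _ * (Complex.I * ∑ j, H i j * ((ρ j : ℂ)⁻¹ * (H *ᵥ u z) j))
  simp only [Finset.mul_sum]
  refine Finset.sum_congr rfl fun j _ => ?_
  push_cast
  ring

lemma IsDHWFlow.sqrt_weightedNormSq_le (hu : IsDHWFlow ρ H f u) (hρ : ∀ i, 0 < ρ i)
    (hH : H.IsHermitian) (hu0 : u 0 = 0) {K : ℝ} (hf : ∀ z, √(∑ i, ‖f z i‖ ^ 2 / ρ i) ≤ K)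
    (z : ℝ) : √(weightedNormSq ρ (u z)) ≤ π * K * |z| := by
  have hK : 0 ≤ K := (Real.sqrt_nonneg _).trans (hf 0)
  have hbound : ∀ w, |-(2 * π * (star (u w) ⬝ᵥ f w).im)|
      ≤ 2 * (π * K) * √(weightedNormSq ρ (u w)) := by
    intro w
    rw [abs_neg, abs_mul, abs_of_pos (by positivity)]
    have := (abs_im_star_dotProduct_le hρ (u w) (f w)).trans
      (mul_le_mul_of_nonneg_left (hf w) (Real.sqrt_nonneg _))
    nlinarith [pi_pos]
  simpa [hu0, weightedNormSq] using sqrt_le_sqrt_add_mul_abs (by positivity)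
    (fun w => weightedNormSq_nonneg hρ (u w))
    (hu.hasDerivAt_weightedNormSq (fun i => (hρ i).ne') hH) hbound z

end DHWFlow

section DHWMatrix

open Matrix

variable {d : ℕ} {k₀ ν : V d} {U : V d → ℂ} {G : Set (V d)}

open Classical in
def dhwMatrix (k₀ : V d) (U : V d → ℂ) (G : Set (V d)) : Matrix G G ℂ :=
  diagonal (fun g : G => (sig k₀ g : ℂ)) + of fun g h : G => U (g - h)

lemma dhwMatrix_mulVec [Fintype G] (v : G → ℂ) (g : G) :
    (dhwMatrix k₀ U G *ᵥ v) g = sig k₀ g * v g + ∑ h : G, U (g - h) * v h := by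
  simp [dhwMatrix, add_mulVec, mulVec_diagonal]
  rfl

lemma isHermitian_dhwMatrix {L : AddSubgroup (V d)} (hG : G ⊆ L)
    (hU : ∀ g ∈ L, U (-g) = starRingEnd ℂ (U g)) : (dhwMatrix k₀ U G).IsHermitian := by
  refine (isHermitian_diagonal_of_self_adjoint _ ?_).add ?_
  · exact funext fun g => Complex.conj_ofReal _
  · ext g h
    simp only [conjTranspose_apply, of_apply, RCLike.star_def]
    rw [← hU _ (L.sub_mem (hG h.2) (hG g.2)), neg_sub]

lemma SatDHW.isDHWFlow [Fintype G] {ψ : ℝ → V d → ℂ} (hψ : SatDHW k₀ ν U G ψ) :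
    IsDHWFlow (fun g : G => rho k₀ ν g) (dhwMatrix k₀ U G) 0 (fun z g => ψ z g) := by
  intro z g
  have h := (hψ z g g.2).2
  rw [tsum_fintype] at h
  simpa [dhwMatrix_mulVec] using h

lemma SatDHW.isDHWFlow_sub {G' : Set (V d)} [Fintype G] [Fintype G'] [Fintype ↥(G \ G')]
    (hG' : G' ⊆ G) {ψ φ : ℝ → V d → ℂ} (hψ : SatDHW k₀ ν U G ψ) (hφ : SatDHW k₀ ν U G' φ) :
    IsDHWFlow (fun g : G' => rho k₀ ν g) (dhwMatrix k₀ U G')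
      (fun z g => -∑ h : ↥(G \ G'), U (g - h) * ψ z h) (fun z g => φ z g - ψ z g) := by
  intro z g
  have hsplit : ∑' h : G, U (g - h) * ψ z h
      = ∑ h : G', U (g - h) * ψ z h + ∑ h : ↥(G \ G'), U (g - h) * ψ z h := by
    have h := Summable.tsum_union_disjoint (f := fun h => U (g - h) * ψ z h) (s := G')
      (t := G \ G') Set.disjoint_sdiff_right .of_finite .of_finite
    rwa [Set.union_sdiff_cancel hG', tsum_fintype (β := G'), tsum_fintype (β := ↥(G \ G'))] at h
  refine ((hφ z g g.2).2.sub (hψ z g (hG' g.2)).2).congr_deriv ?_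
  rw [tsum_fintype, hsplit, dhwMatrix_mulVec]
  simp only [mul_sub, Finset.sum_sub_distrib]
  ring

lemma weightedNormSq_delta [Fintype G] {ψ : ℝ → V d → ℂ} (hψ : InitDelta G ψ)
    (h0 : (0 : V d) ∈ G) :
    weightedNormSq (fun g : G => rho k₀ ν g) (fun g => ψ 0 g) = ⟪k₀, ν⟫ := by
  rw [weightedNormSq, Fintype.sum_eq_single ⟨0, h0⟩ fun g hg => by
    simp [hψ g g.2, show (g : V d) ≠ 0 from fun h => hg (Subtype.ext h)]]
  simp [hψ 0 h0, rho]

lemma dhwMatrix_mulVec_delta [Fintype G] {ψ : ℝ → V d → ℂ} (hψ : InitDelta G ψ)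
    (h0 : (0 : V d) ∈ G) (g : G) : (dhwMatrix k₀ U G *ᵥ fun h => ψ 0 h) g = U g := by
  rw [dhwMatrix_mulVec, Fintype.sum_eq_single ⟨0, h0⟩ fun h hh => by
    simp [hψ h h.2, show (h : V d) ≠ 0 from fun h' => hh (Subtype.ext h')]]
  by_cases hg : (g : V d) = 0 <;> simp [hψ g g.2, hψ 0 h0, hg, sig]

end DHWMatrix

section Estimates

open Matrix

variable {d : ℕ} {k₀ ν : V d} {U : V d → ℂ} {L : AddSubgroup (V d)} {CU α : ℝ}

lemma Sm_zero (Λ : Set (V d)) (β : ℝ) :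
    Sm Λ 0 β = ∑' κ : Λ, Real.exp (-β * ‖(κ : V d)‖) := by
  simp [Sm]

lemma one_le_Sm_zero (hsum : Summable fun κ : L => Real.exp (-α * ‖(κ : V d)‖)) :
    1 ≤ Sm (L : Set (V d)) 0 α := by
  simpa [Sm_zero] using hsum.le_tsum ⟨0, L.zero_mem⟩ fun _ _ => (Real.exp_pos _).le

lemma sum_sq_sum_norm_U_mul_le {S T : Set (V d)} [Fintype S] [Fintype T]
    (hUbd : ∀ g ∈ L, ‖U g‖ ≤ CU * Real.exp (-α * ‖g‖)) (hCU : 0 ≤ CU) (hS : S ⊆ L) (hT : T ⊆ L)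
    {B : ℝ} (hB : 0 ≤ B) (hrow : ∀ g : S, ∑ h : T, Real.exp (-α * ‖(g : V d) - h‖) ≤ B)
    (hcol : ∀ h : T, ∑ g : S, Real.exp (-α * ‖(h : V d) - g‖) ≤ B) (x : T → ℝ) :
    ∑ g : S, (∑ h : T, ‖U (g - h)‖ * x h) ^ 2 ≤ (CU * B) ^ 2 * ∑ h, x h ^ 2 := by
  have hU : ∀ (g : S) (h : T), ‖U (g - h)‖ ≤ CU * Real.exp (-α * ‖(g : V d) - h‖) :=
    fun g h => hUbd _ (L.sub_mem (hS g.2) (hT h.2))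
  rw [sq]
  refine sum_sq_sum_mul_le (fun _ _ => norm_nonneg _) (mul_nonneg hCU hB) (fun g => ?_)
    (fun h => ?_) x
  · exact (Finset.sum_le_sum fun h _ => hU g h).trans
      (by rw [← Finset.mul_sum]; exact mul_le_mul_of_nonneg_left (hrow g) hCU)
  · refine (Finset.sum_le_sum fun g _ => (hU g h).trans_eq (by rw [norm_sub_rev])).trans ?_
    rw [← Finset.mul_sum]
    exact mul_le_mul_of_nonneg_left (hcol h) hCU

lemma sum_norm_sq_coupling_div_le {S T : Set (V d)} [Fintype S] [Fintype T]
    (hUbd : ∀ g ∈ L, ‖U g‖ ≤ CU * Real.exp (-α * ‖g‖)) (hCU : 0 ≤ CU) (hS : S ⊆ L) (hT : T ⊆ L)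
    (hST : Disjoint S T) {c : ℝ} (hc : 0 < c) (hρ : ∀ g ∈ S, c ≤ rho k₀ ν g)
    (hsum : Summable fun κ : L => Real.exp (-α * ‖(κ : V d)‖)) (φ : V d → ℂ) :
    ∑ g : S, ‖∑ h : T, U (g - h) * φ h‖ ^ 2 / rho k₀ ν g
      ≤ (CU * (Sm (L : Set (V d)) 0 α - 1)) ^ 2 * (∑ h : T, ‖φ h‖ ^ 2) / c := by
  have hrow : ∀ g : S, ∑ h : T, Real.exp (-α * ‖(g : V d) - h‖) ≤ Sm (L : Set (V d)) 0 α - 1 :=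
    fun g => by
      rw [Sm_zero, le_sub_iff_add_le]
      exact sum_exp_neg_norm_sub_add_one_le hsum Subtype.val_injective (fun h => hT h.2) (hS g.2)
        fun h hh => hST.ne_of_mem g.2 h.2 hh.symm
  have hcol : ∀ h : T, ∑ g : S, Real.exp (-α * ‖(h : V d) - g‖) ≤ Sm (L : Set (V d)) 0 α - 1 :=
    fun h => by
      rw [Sm_zero, le_sub_iff_add_le]
      exact sum_exp_neg_norm_sub_add_one_le hsum Subtype.val_injective (fun g => hS g.2) (hT h.2)
        fun g hg => hST.ne_of_mem g.2 h.2 hg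
  calc _ ≤ ∑ g : S, (∑ h : T, ‖U (g - h)‖ * ‖φ h‖) ^ 2 / c :=
        Finset.sum_le_sum fun g _ => div_le_div₀ (sq_nonneg _) (pow_le_pow_left₀ (norm_nonneg _)
          ((norm_sum_le _ _).trans_eq (by simp only [norm_mul])) 2) hc (hρ g g.2)
    _ = (∑ g : S, (∑ h : T, ‖U (g - h)‖ * ‖φ h‖) ^ 2) / c := (Finset.sum_div _ _ _).symm
    _ ≤ _ := div_le_div_of_nonneg_right (sum_sq_sum_norm_U_mul_le hUbd hCU hS hT
        (sub_nonneg.2 (one_le_Sm_zero hsum)) hrow hcol _) hc.le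

lemma weightedNormSq_inv_mul_mulVec_delta_le {G : Set (V d)} [Fintype G] {ψ : ℝ → V d → ℂ}
    (hψ : InitDelta G ψ) (h0 : (0 : V d) ∈ G)
    (hUbd : ∀ g ∈ L, ‖U g‖ ≤ CU * Real.exp (-α * ‖g‖)) (hCU : 0 ≤ CU) (hG : G ⊆ L) {c : ℝ}
    (hc : 0 < c) (hρ : ∀ g ∈ G, c ≤ rho k₀ ν g)
    (hsum : Summable fun κ : L => Real.exp (-α * ‖(κ : V d)‖)) :
    weightedNormSq (fun g : G => rho k₀ ν g)
        (fun g => ((rho k₀ ν g : ℂ))⁻¹ * (dhwMatrix k₀ U G *ᵥ fun h => ψ 0 h) g)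
      ≤ (CU * Sm (L : Set (V d)) 0 α) ^ 2 / c := by
  have hterm : ∀ g : G, rho k₀ ν g * ‖((rho k₀ ν g : ℂ))⁻¹ * U g‖ ^ 2 ≤ ‖U g‖ ^ 2 / c :=
    fun g => by
      have hρg : 0 < rho k₀ ν g := hc.trans_le (hρ g g.2)
      rw [norm_mul, norm_inv, Complex.norm_real, Real.norm_eq_abs, abs_of_pos hρg]
      calc rho k₀ ν g * ((rho k₀ ν g)⁻¹ * ‖U g‖) ^ 2 = ‖U g‖ ^ 2 / rho k₀ ν g := by
            field_simp
        _ ≤ ‖U g‖ ^ 2 / c := div_le_div_of_nonneg_left (sq_nonneg _) hc (hρ g g.2)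
  have hsumU : ∑ g : G, ‖U g‖ ≤ CU * Sm (L : Set (V d)) 0 α := by
    have h := sum_exp_neg_norm_sub_le hsum Subtype.val_injective (fun g : G => hG g.2) L.zero_mem
    simp only [zero_sub, norm_neg] at h
    rw [Sm_zero]
    calc ∑ g : G, ‖U g‖ ≤ ∑ g : G, CU * Real.exp (-α * ‖(g : V d)‖) :=
          Finset.sum_le_sum fun g _ => hUbd g (hG g.2)
      _ ≤ _ := by rw [← Finset.mul_sum]; exact mul_le_mul_of_nonneg_left h hCU
  simp only [weightedNormSq, dhwMatrix_mulVec_delta hψ h0]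
  calc _ ≤ ∑ g : G, ‖U g‖ ^ 2 / c := Finset.sum_le_sum fun g _ => hterm g
    _ ≤ (∑ g : G, ‖U g‖) ^ 2 / c := by
        rw [← Finset.sum_div]
        exact div_le_div_of_nonneg_right
          (Finset.sum_sq_le_sq_sum_of_nonneg fun _ _ => norm_nonneg _) hc.le
    _ ≤ _ := by gcongr

lemma sum_sig_sq_div_mul_norm_sq_le {G : Set (V d)} [Fintype G]
    (hUbd : ∀ g ∈ L, ‖U g‖ ≤ CU * Real.exp (-α * ‖g‖)) (hCU : 0 ≤ CU) (hG : G ⊆ L) {c : ℝ}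
    (hc : 0 < c) (hρ : ∀ g ∈ G, c ≤ rho k₀ ν g) {B : ℝ} (hB : 0 ≤ B)
    (hrow : ∀ g : G, ∑ h : G, Real.exp (-α * ‖(g : V d) - h‖) ≤ B) (v : G → ℂ) :
    ∑ g : G, sig k₀ g ^ 2 / rho k₀ ν g * ‖v g‖ ^ 2 ≤
      2 * weightedNormSq (fun g : G => rho k₀ ν g)
          (fun g => ((rho k₀ ν g : ℂ))⁻¹ * (dhwMatrix k₀ U G *ᵥ v) g)
        + 2 * ((CU * B) ^ 2 * ∑ g, ‖v g‖ ^ 2) / c := by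
  set w : G → ℝ := fun g => ∑ h : G, ‖U (g - h)‖ * ‖v h‖
  have hpt : ∀ g : G, sig k₀ g ^ 2 / rho k₀ ν g * ‖v g‖ ^ 2 ≤
      2 * (rho k₀ ν g * ‖((rho k₀ ν g : ℂ))⁻¹ * (dhwMatrix k₀ U G *ᵥ v) g‖ ^ 2)
        + 2 * w g ^ 2 / c := fun g => by
    have hρg : 0 < rho k₀ ν g := hc.trans_le (hρ g g.2)
    refine sq_div_mul_sq_le hc (hρ g g.2) ?_ (norm_nonneg _)
    have hid : (sig k₀ g : ℂ) * v g = (rho k₀ ν g : ℂ) * (((rho k₀ ν g : ℂ))⁻¹ *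
        (dhwMatrix k₀ U G *ᵥ v) g) - ∑ h : G, U (g - h) * v h := by
      rw [dhwMatrix_mulVec, mul_inv_cancel_left₀ (by exact_mod_cast hρg.ne')]
      ring
    calc |sig k₀ g| * ‖v g‖ = ‖(sig k₀ g : ℂ) * v g‖ := by
          rw [norm_mul, Complex.norm_real, Real.norm_eq_abs]
      _ ≤ _ := hid ▸ norm_sub_le _ _
      _ ≤ _ := by
          refine add_le_add (by rw [norm_mul, Complex.norm_real, Real.norm_eq_abs,
            abs_of_pos hρg]) ((norm_sum_le _ _).trans_eq ?_)
          simp only [w, norm_mul]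
  calc _ ≤ ∑ g : G, (2 * (rho k₀ ν g * ‖((rho k₀ ν g : ℂ))⁻¹ * (dhwMatrix k₀ U G *ᵥ v) g‖ ^ 2)
        + 2 * w g ^ 2 / c) := Finset.sum_le_sum fun g _ => hpt g
    _ = _ := by rw [Finset.sum_add_distrib, ← Finset.mul_sum, ← Finset.sum_div, ← Finset.mul_sum]
    _ ≤ _ := by
        gcongr ?_ + 2 * ?_ / c
        · exact le_rfl
        · exact sum_sq_sum_norm_U_mul_le hUbd hCU hG hG hB hrow hrow fun h => ‖v h‖

lemma sum_norm_sq_le_of_two_mul_le_abs_sig {G R : Set (V d)} [Fintype G] [Fintype R]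
    (hRG : R ⊆ G) {c st : ℝ} (hc : 0 < c) (hst : 0 < st) (hρ : ∀ g ∈ G, c ≤ rho k₀ ν g)
    (hsep : ∀ g ∈ R, 2 * st * rho k₀ ν g ≤ |sig k₀ g|) (φ : V d → ℂ) :
    ∑ h : R, ‖φ h‖ ^ 2 ≤ (∑ g : G, sig k₀ g ^ 2 / rho k₀ ν g * ‖φ g‖ ^ 2) / (4 * st ^ 2 * c) := by
  rw [le_div_iff₀ (by positivity), Finset.sum_mul]
  refine (Finset.sum_le_sum fun h _ => ?_).trans (sum_subtype_le_of_subset hRG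
    (F := fun g => sig k₀ g ^ 2 / rho k₀ ν g * ‖φ g‖ ^ 2) fun g hg =>
    mul_nonneg (div_nonneg (sq_nonneg _) (hc.trans_le (hρ g hg)).le) (sq_nonneg _))
  have hρh : c ≤ rho k₀ ν h := hρ h (hRG h.2)
  have hρh' : 0 < rho k₀ ν h := hc.trans_le hρh
  have hsq : (2 * st * rho k₀ ν h) ^ 2 ≤ sig k₀ h ^ 2 := by
    rw [← sq_abs (sig k₀ h)]
    exact pow_le_pow_left₀ (by positivity) (hsep h h.2) 2
  have : 4 * st ^ 2 * c ≤ sig k₀ h ^ 2 / rho k₀ ν h := by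
    rw [le_div_iff₀ hρh']
    nlinarith [sq_nonneg st]
  rw [mul_comm]
  exact mul_le_mul_of_nonneg_right this (sq_nonneg _)

lemma two_mul_le_abs_sig_of_mem_sdiff {G : Set (V d)} {st : ℝ} {g : V d}
    (hg : g ∈ G \ {g ∈ G | |sig k₀ g| / (2 * rho k₀ ν g) < st}) (hρ : 0 < rho k₀ ν g) :
    2 * st * rho k₀ ν g ≤ |sig k₀ g| := by
  have h : st ≤ |sig k₀ g| / (2 * rho k₀ ν g) := not_lt.mp fun h => hg.2 ⟨hg.1, h⟩
  rw [le_div_iff₀ (by positivity)] at h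
  linarith

lemma sum_norm_sq_forcing_div_le {G G' : Set (V d)} [Fintype G] [Fintype G'] [Fintype ↥(G \ G')]
    (hUbd : ∀ g ∈ L, ‖U g‖ ≤ CU * Real.exp (-α * ‖g‖)) (hCU : 0 ≤ CU) (hG : G ⊆ L)
    (hG' : G' ⊆ G) {c r st : ℝ} (hc : 0 < c) (hcr : c ≤ r) (hst : 0 < st)
    (hρ : ∀ g ∈ G, c ≤ rho k₀ ν g) (hsep : ∀ g ∈ G \ G', 2 * st * rho k₀ ν g ≤ |sig k₀ g|)
    (hsum : Summable fun κ : L => Real.exp (-α * ‖(κ : V d)‖)) (φ : V d → ℂ)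
    (hE : weightedNormSq (fun g : G => rho k₀ ν g) (fun g => φ g) = r)
    (hχ : weightedNormSq (fun g : G => rho k₀ ν g)
        (fun g => ((rho k₀ ν g : ℂ))⁻¹ * (dhwMatrix k₀ U G *ᵥ fun h => φ h) g)
      ≤ (CU * Sm (L : Set (V d)) 0 α) ^ 2 / c) :
    ∑ g : G', ‖-∑ h : ↥(G \ G'), U (g - h) * φ h‖ ^ 2 / rho k₀ ν g
      ≤ (CU ^ 2 * (Sm (L : Set (V d)) 0 α - 1) * Sm (L : Set (V d)) 0 α * √r
          / (st * c ^ 2)) ^ 2 := by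
  have hrow : ∀ g : G, ∑ h : G, Real.exp (-α * ‖(g : V d) - h‖) ≤ Sm (L : Set (V d)) 0 α :=
    fun g => by
      rw [Sm_zero]
      exact sum_exp_neg_norm_sub_le hsum Subtype.val_injective (fun h => hG h.2) (hG g.2)
  have hB := sum_norm_sq_coupling_div_le (T := G \ G') hUbd hCU (hG'.trans hG)
    (Set.sdiff_subset.trans hG) Set.disjoint_sdiff_right hc (fun g hg => hρ g (hG' hg)) hsum φ
  set S := Sm (L : Set (V d)) 0 α
  have hS : 1 ≤ S := one_le_Sm_zero hsum
  have hP : ∑ g : G, ‖φ g‖ ^ 2 ≤ r / c :=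
    (sum_norm_sq_le_weightedNormSq_div hc (fun g : G => hρ g g.2) _).trans_eq (by rw [hE])
  have hσ : ∑ g : G, sig k₀ g ^ 2 / rho k₀ ν g * ‖φ g‖ ^ 2 ≤ 4 * (CU * S) ^ 2 * r / c ^ 2 := by
    refine (sum_sig_sq_div_mul_norm_sq_le hUbd hCU hG hc hρ (by linarith) hrow _).trans ?_
    have h1 : (CU * S) ^ 2 / c ≤ (CU * S) ^ 2 * r / c ^ 2 := by
      rw [div_le_div_iff₀ hc (by positivity)]
      nlinarith [mul_nonneg (mul_nonneg (sq_nonneg (CU * S)) hc.le) (sub_nonneg.2 hcr)]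
    have h2 : (CU * S) ^ 2 * (r / c) / c = (CU * S) ^ 2 * r / c ^ 2 := by ring
    calc _ ≤ 2 * ((CU * S) ^ 2 / c) + 2 * ((CU * S) ^ 2 * (r / c)) / c := by gcongr
      _ ≤ 2 * ((CU * S) ^ 2 * r / c ^ 2) + 2 * ((CU * S) ^ 2 * r / c ^ 2) := by
          rw [mul_div_assoc, h2]; gcongr
      _ = _ := by ring
  have hR : ∑ h : ↥(G \ G'), ‖φ h‖ ^ 2 ≤ (CU * S) ^ 2 * r / (st ^ 2 * c ^ 3) :=
    (sum_norm_sq_le_of_two_mul_le_abs_sig Set.sdiff_subset hc hst hρ hsep φ).trans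
      ((div_le_div_of_nonneg_right hσ (by positivity)).trans_eq (by field_simp))
  simp only [norm_neg]
  calc _ ≤ (CU * (S - 1)) ^ 2 * (∑ h : ↥(G \ G'), ‖φ h‖ ^ 2) / c := hB
    _ ≤ (CU * (S - 1)) ^ 2 * ((CU * S) ^ 2 * r / (st ^ 2 * c ^ 3)) / c := by gcongr
    _ = _ := by
        simp only [div_pow, mul_pow, Real.sq_sqrt (hc.le.trans hcr)]
        field_simp

lemma SatDHW.sqrt_sum_norm_sq_forcing_div_le {G G' : Set (V d)} [Fintype G] [Fintype G']
    [Fintype ↥(G \ G')] {ψ : ℝ → V d → ℂ} (hψ : SatDHW k₀ ν U G ψ) (hψ0 : InitDelta G ψ)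
    (h0 : (0 : V d) ∈ G) (hUsym : ∀ g ∈ L, U (-g) = starRingEnd ℂ (U g))
    (hUbd : ∀ g ∈ L, ‖U g‖ ≤ CU * Real.exp (-α * ‖g‖)) (hCU : 0 ≤ CU) (hG : G ⊆ L)
    (hG' : G' ⊆ G) {c st : ℝ} (hc : 0 < c) (hcr : c ≤ ⟪k₀, ν⟫) (hst : 0 < st)
    (hρ : ∀ g ∈ G, c ≤ rho k₀ ν g) (hsep : ∀ g ∈ G \ G', 2 * st * rho k₀ ν g ≤ |sig k₀ g|)
    (hsum : Summable fun κ : L => Real.exp (-α * ‖(κ : V d)‖)) (w : ℝ) :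
    √(∑ g : G', ‖-∑ h : ↥(G \ G'), U (g - h) * ψ w h‖ ^ 2 / rho k₀ ν g)
      ≤ CU ^ 2 * (Sm (L : Set (V d)) 0 α - 1) * Sm (L : Set (V d)) 0 α * √⟪k₀, ν⟫
          / (st * c ^ 2) := by
  have hρ' : ∀ g : G, rho k₀ ν g ≠ 0 := fun g => (hc.trans_le (hρ g g.2)).ne'
  have hH := isHermitian_dhwMatrix (k₀ := k₀) hG hUsym
  have hflow := hψ.isDHWFlow
  have hS := one_le_Sm_zero hsum
  refine Real.sqrt_le_iff.mpr ⟨div_nonneg (mul_nonneg (mul_nonneg (mul_nonneg (sq_nonneg _)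
    (sub_nonneg.2 hS)) (by linarith)) (Real.sqrt_nonneg _)) (by positivity), ?_⟩
  exact sum_norm_sq_forcing_div_le hUbd hCU hG hG' hc hcr hst hρ hsep hsum (ψ w)
    (by rw [hflow.weightedNormSq_eq hρ' hH w, weightedNormSq_delta hψ0 h0])
    ((hflow.inv_mul_mulVec.weightedNormSq_eq hρ' hH w).trans_le
      (weightedNormSq_inv_mul_mulVec_delta_le hψ0 h0 hUbd hCU hG hc hρ hsum))

end Estimates

/-- Theorem 3.10, reduction to the Ewald sphere:
with `G^M_Ew = {g ∈ G^M : |σ_g|/(2ρ_g) < s̃}` and solutions `ψ^M`, `ψ^M_Ew` of the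
finite systems `DHW_{G^M}` and `DHW_{G^M_Ew}` with initial datum `δ`, one has
`‖ψ^M_Ew(z) - ψ^M(z)|_{G^M_Ew}‖ ≤ |z|·(π/s̃)·(C_U²(𝔖₀(α_U)-1)𝔖₀(α_U)/(γ²ρ₀²))·√ρ₀`
for all `z`. -/
theorem stmt9 {d : ℕ} (hd : 0 < d) (Λ : Set (V d)) (hΛ : IsLattice Λ)
    (k₀ : V d) (hk : 0 < ⟪k₀, nu d hd⟫)
    (U : V d → ℂ) (hUsym : ∀ g ∈ Λ, U (-g) = starRingEnd ℂ (U g))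
    (CU αU : ℝ) (hCU : 0 < CU) (hαU : 0 < αU)
    (hUbd : ∀ g ∈ Λ, ‖U g‖ ≤ CU * Real.exp (-αU * ‖g‖))
    (γ : ℝ) (hγ : γ ∈ Set.Ioo (0 : ℝ) 1)
    (M : ℝ) (hM : 0 < M) (hMsub : GMball Λ M ⊆ Gset Λ k₀ (nu d hd) γ)
    (st : ℝ) (hst : 0 < st)
    (ψM : ℝ → V d → ℂ)
    (hψM : SatDHW k₀ (nu d hd) U (GMball Λ M) ψM)
    (hψM0 : InitDelta (GMball Λ M) ψM)
    (ψEw : ℝ → V d → ℂ)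
    (hψEw : SatDHW k₀ (nu d hd) U
      {g ∈ GMball Λ M | |sig k₀ g| / (2 * rho k₀ (nu d hd) g) < st} ψEw)
    (hψEw0 : InitDelta
      {g ∈ GMball Λ M | |sig k₀ g| / (2 * rho k₀ (nu d hd) g) < st} ψEw) :
    ∀ z : ℝ,
      Real.sqrt (∑' g : {g ∈ GMball Λ M |
            |sig k₀ g| / (2 * rho k₀ (nu d hd) g) < st},
          rho k₀ (nu d hd) (g : V d) * ‖ψEw z (g : V d) - ψM z (g : V d)‖ ^ 2) ≤
        |z| * (π / st) *
          (CU ^ 2 * (Sm Λ 0 αU - 1) * Sm Λ 0 αU / (γ ^ 2 * ⟪k₀, nu d hd⟫ ^ 2)) *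
            Real.sqrt ⟪k₀, nu d hd⟫ := by
  intro z
  obtain ⟨b, rfl⟩ := hΛ.exists_eq_span
  set L := Submodule.span ℤ (Set.range b)
  set G := GMball (L.toAddSubgroup : Set (V d)) M
  set Ew := {g ∈ G | |sig k₀ g| / (2 * rho k₀ (nu d hd) g) < st}
  have hfin : G.Finite := finite_GMball_span b M
  have := hfin.fintype
  have := (hfin.subset (Set.sep_subset _ _) : Ew.Finite).fintype
  have := (hfin.sdiff : (G \ Ew).Finite).fintype
  have hG : G ⊆ L.toAddSubgroup := fun _ hg => hg.1
  have hc : 0 < γ * ⟪k₀, nu d hd⟫ := mul_pos hγ.1 hk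
  have hρ : ∀ g ∈ G, γ * ⟪k₀, nu d hd⟫ ≤ rho k₀ (nu d hd) g := fun _ hg => (hMsub hg).2
  have hforce := hψM.sqrt_sum_norm_sq_forcing_div_le hψM0 ⟨L.zero_mem, by simpa using hM.le⟩
    hUsym hUbd hCU.le hG (Set.sep_subset _ _) hc (mul_le_of_le_one_left hk.le hγ.2.le) hst hρ
    (fun g hg => two_mul_le_abs_sig_of_mem_sdiff hg (hc.trans_le (hρ g hg.1)))
    (ZLattice.summable_exp_neg_mul_norm L hαU)
  have h := (hψM.isDHWFlow_sub (Set.sep_subset _ _) hψEw).sqrt_weightedNormSq_le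
    (fun g => hc.trans_le (hρ g g.2.1)) (isHermitian_dhwMatrix (fun g hg => hG hg.1) hUsym)
    (funext fun g => by simp [hψEw0 g g.2, hψM0 g g.2.1]) hforce z
  rw [tsum_fintype]
  exact h.trans_eq (by field_simp)
end
end

section
/- Let ρ₀ > 0, U₀ ∈ ℝ, and Û ∈ ℂ. Let (ψ₀, ψ₁) : ℝ → ℂ² be the unique differentiable solution of the two-beam system (ρ₀/π)·ψ₀′(z) = i·(U₀·ψ₀(z) + conj(Û)·ψ₁(z)), (ρ₀/π)·ψ₁′(z) = i·(Û·ψ₀(z) + U₀·ψ₁(z)) with initial conditions ψ₀(0) = 1 and ψ₁(0) = 0. Then for all z ∈ ℝ: |ψ₀(z)|² = cos²(π·|Û|·z/ρ₀) and |ψ₁(z)|² = sin²(π·|Û|·z/ρ₀). -/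
/-! With `c = π / ρ₀`, the two-beam system is the linear ODE `ψ' = i c H ψ` for the Hermitian
matrix `H = [[U₀, conj Û], [Û, U₀]]`, and the Pendellösung
`ψ₀ = e^{i c U₀ z} cos (c |Û| z)`, `ψ₁ = i e^{i c U₀ z} (Û / |Û|) sin (c |Û| z)`
solves it with the given initial values. A linear vector field is globally Lipschitz, so this is the only solution,
and the phase `e^{i c U₀ z}` drops out of the moduli. -/

noncomputable section

open Real Complex ComplexConjugate ContinuousLinearMap

theorem ODE_solution_unique_of_linear {E : Type*} [NormedAddCommGroup E] [NormedSpace ℝ E]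
    (A : E →L[ℝ] E) {f g : ℝ → E} (hf : ∀ t, HasDerivAt f (A (f t)) t)
    (hg : ∀ t, HasDerivAt g (A (g t)) t) {t₀ : ℝ} (h : f t₀ = g t₀) : f = g :=
  ODE_solution_unique_univ (v := fun _ => A) (s := fun _ => Set.univ)
    (fun _ => A.lipschitz.lipschitzOnWith) (fun t => ⟨hf t, trivial⟩)
    (fun t => ⟨hg t, trivial⟩) h

section TwoBeam

variable (c U₀ : ℝ) (Uh : ℂ)

def twoBeamGenerator : ℂ × ℂ →L[ℝ] ℂ × ℂ :=
  ((c * I : ℂ) • ((U₀ : ℂ) • fst ℂ ℂ ℂ + conj Uh • snd ℂ ℂ ℂ).prod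
    (Uh • fst ℂ ℂ ℂ + (U₀ : ℂ) • snd ℂ ℂ ℂ)).restrictScalars ℝ

@[simp]
theorem twoBeamGenerator_apply (p : ℂ × ℂ) :
    twoBeamGenerator c U₀ Uh p =
      (c * (I * (U₀ * p.1 + conj Uh * p.2)), c * (I * (Uh * p.1 + U₀ * p.2))) := by
  simp only [twoBeamGenerator, coe_restrictScalars', smul_apply, prod_apply, add_apply,
    coe_fst', coe_snd', smul_eq_mul, Prod.smul_mk]
  ext <;> ring_nf

/-- When `Uh = 0` the junk value `Uh / ‖Uh‖ = 0` is harmless: the sine factor vanishes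
anyway. -/
def twoBeamSolution (z : ℝ) : ℂ × ℂ :=
  (exp (I * (c * U₀ * z : ℝ)) * (Real.cos (c * ‖Uh‖ * z) : ℂ),
    exp (I * (c * U₀ * z : ℝ)) * (I * (Uh / ‖Uh‖) * (Real.sin (c * ‖Uh‖ * z) : ℂ)))

theorem twoBeamSolution_zero : twoBeamSolution c U₀ Uh 0 = (1, 0) := by
  simp [twoBeamSolution]

theorem hasDerivAt_twoBeamSolution (z : ℝ) :
    HasDerivAt (twoBeamSolution c U₀ Uh)
      (twoBeamGenerator c U₀ Uh (twoBeamSolution c U₀ Uh z)) z := by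
  have hlin (a : ℝ) : HasDerivAt (fun z : ℝ => a * z) a z := by
    simpa using (hasDerivAt_id z).const_mul a
  have hphase := ((hlin (c * U₀)).ofReal_comp.const_mul I).cexp
  have hcos := ((Real.hasDerivAt_cos _).comp z (hlin (c * ‖Uh‖))).ofReal_comp
  have hsin := ((Real.hasDerivAt_sin _).comp z (hlin (c * ‖Uh‖))).ofReal_comp
  have hconj : conj Uh * (Uh / ‖Uh‖) = ‖Uh‖ := by
    rw [← mul_div_assoc, conj_mul', sq, mul_self_div_self]
  have hnorm : (‖Uh‖ : ℂ) * (Uh / ‖Uh‖) = Uh := by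
    rcases eq_or_ne Uh 0 with rfl | h
    · simp
    · exact mul_div_cancel₀ _ (by exact_mod_cast norm_ne_zero_iff.mpr h)
  refine ((hphase.mul hcos).prodMk
    (hphase.mul (hsin.const_mul (I * (Uh / ‖Uh‖))))).congr_deriv ?_
  simp only [twoBeamSolution, twoBeamGenerator_apply, Function.comp_def, Prod.mk.injEq]
  generalize exp (I * ((c * U₀ * z : ℝ) : ℂ)) = E
  generalize Real.cos (c * ‖Uh‖ * z) = C
  generalize Real.sin (c * ‖Uh‖ * z) = S
  push_cast
  constructor
  · linear_combination (E * c * S) * hconj - (E * c * S * conj Uh * Uh / ‖Uh‖) * I_sq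
  · linear_combination (E * I * c * C) * hnorm

theorem norm_twoBeamSolution_fst_sq (z : ℝ) :
    ‖(twoBeamSolution c U₀ Uh z).1‖ ^ 2 = Real.cos (c * ‖Uh‖ * z) ^ 2 := by
  simp only [twoBeamSolution, norm_mul, norm_exp_I_mul_ofReal, norm_real, Real.norm_eq_abs,
    one_mul, sq_abs]

theorem norm_twoBeamSolution_snd_sq (z : ℝ) :
    ‖(twoBeamSolution c U₀ Uh z).2‖ ^ 2 = Real.sin (c * ‖Uh‖ * z) ^ 2 := by
  rcases eq_or_ne Uh 0 with rfl | h
  · simp [twoBeamSolution]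
  · simp only [twoBeamSolution, norm_mul, norm_exp_I_mul_ofReal, norm_I, norm_div, norm_real,
      abs_norm, div_self (norm_ne_zero_iff.mpr h), Real.norm_eq_abs, one_mul, sq_abs]

end TwoBeam

theorem stmt11_general (ρ₀ : ℝ) (U₀ : ℝ) (Uh : ℂ)
    (ψ₀ ψ₁ : ℝ → ℂ)
    (h₀ : ∀ z : ℝ, HasDerivAt ψ₀
      (((π / ρ₀ : ℝ) : ℂ) * (Complex.I * ((U₀ : ℂ) * ψ₀ z + (starRingEnd ℂ) Uh * ψ₁ z))) z)
    (h₁ : ∀ z : ℝ, HasDerivAt ψ₁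
      (((π / ρ₀ : ℝ) : ℂ) * (Complex.I * (Uh * ψ₀ z + (U₀ : ℂ) * ψ₁ z))) z)
    (hi₀ : ψ₀ 0 = 1) (hi₁ : ψ₁ 0 = 0) :
    ∀ z : ℝ,
      ‖ψ₀ z‖ ^ 2 = Real.cos (π * ‖Uh‖ * z / ρ₀) ^ 2 ∧
      ‖ψ₁ z‖ ^ 2 = Real.sin (π * ‖Uh‖ * z / ρ₀) ^ 2 := by
  have hψ : (fun z => (ψ₀ z, ψ₁ z)) = twoBeamSolution (π / ρ₀) U₀ Uh :=
    ODE_solution_unique_of_linear (twoBeamGenerator (π / ρ₀) U₀ Uh)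
      (fun z => by simpa using (h₀ z).prodMk (h₁ z)) (hasDerivAt_twoBeamSolution _ _ _)
      (t₀ := 0) (by rw [hi₀, hi₁, twoBeamSolution_zero])
  intro z
  have harg : π * ‖Uh‖ * z / ρ₀ = π / ρ₀ * ‖Uh‖ * z := by ring
  rw [harg, ← norm_twoBeamSolution_fst_sq, ← norm_twoBeamSolution_snd_sq, ← hψ]
  exact ⟨rfl, rfl⟩

/-- two-beam approximation, "pendellösung"/beating:
the solution of the two-beam system
`(ρ₀/π)ψ₀′ = i(U₀ψ₀ + conj(Û)ψ₁)`, `(ρ₀/π)ψ₁′ = i(Ûψ₀ + U₀ψ₁)` with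
`ψ₀(0) = 1`, `ψ₁(0) = 0` satisfies `|ψ₀(z)|² = cos²(π|Û|z/ρ₀)` and
`|ψ₁(z)|² = sin²(π|Û|z/ρ₀)`. -/
theorem stmt11 (ρ₀ : ℝ) (hρ : 0 < ρ₀) (U₀ : ℝ) (Uh : ℂ)
    (ψ₀ ψ₁ : ℝ → ℂ)
    (h₀ : ∀ z : ℝ, HasDerivAt ψ₀
      (((π / ρ₀ : ℝ) : ℂ) * (Complex.I * ((U₀ : ℂ) * ψ₀ z + (starRingEnd ℂ) Uh * ψ₁ z))) z)
    (h₁ : ∀ z : ℝ, HasDerivAt ψ₁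
      (((π / ρ₀ : ℝ) : ℂ) * (Complex.I * (Uh * ψ₀ z + (U₀ : ℂ) * ψ₁ z))) z)
    (hi₀ : ψ₀ 0 = 1) (hi₁ : ψ₁ 0 = 0) :
    ∀ z : ℝ,
      ‖ψ₀ z‖ ^ 2 = Real.cos (π * ‖Uh‖ * z / ρ₀) ^ 2 ∧
      ‖ψ₁ z‖ ^ 2 = Real.sin (π * ‖Uh‖ * z / ρ₀) ^ 2 :=
  stmt11_general ρ₀ U₀ Uh ψ₀ ψ₁ h₀ h₁ hi₀ hi₁
end
end
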